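/- arXiv:2003.04254 — 3 statements merged into one kernel-verified Lean document; each statement's English description precedes it below -/
import Mathlib

section
/- Let G be a finite simple graph and let S ⊆ V(G) be a vertex cover of G. If G admits a b-coloring with k colors, then k ≤ |S| + 1. -/
/-!
If two distinct colours `i` and `j` were both absent from `c(S)`, the `b`-vertex of colour `i`
would have a neighbour of colour `j`, and the edge between them would avoid the vertex cover `S`.
So at most one colour is missing from `c(S)`, whence `k ≤ |c(S)| + 1 ≤ |S| + 1`.
-/

/-- `G` admits a `b`-coloring with `k` colors: a proper coloring with colors `Fin k`
such that every color `i` has a `b`-vertex. -/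
def SimpleGraph.HasBColoring {α : Type*} (G : SimpleGraph α) (k : ℕ) : Prop :=
  ∃ c : α → Fin k,
    (∀ u v, G.Adj u v → c u ≠ c v) ∧
    ∀ i : Fin k, ∃ v, c v = i ∧ ∀ j : Fin k, j ≠ i → ∃ u, G.Adj v u ∧ c u = j

theorem Set.natCard_le_ncard_add_one_of_subsingleton_compl {α : Type*} [Finite α] {s : Set α}
    (h : sᶜ.Subsingleton) : Nat.card α ≤ s.ncard + 1 := by
  rw [← Set.ncard_add_ncard_compl s]
  have hcompl : sᶜ.ncard ≤ 1 := Set.ncard_le_one_iff_subsingleton.mpr h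
  omega

theorem SimpleGraph.IsVertexCover.subsingleton_compl_image {V ι : Type*} {G : SimpleGraph V}
    {S : Set V} (hS : G.IsVertexCover S) {c : V → ι}
    (hb : ∀ i, ∃ v, c v = i ∧ ∀ j, j ≠ i → ∃ u, G.Adj v u ∧ c u = j) :
    (c '' S)ᶜ.Subsingleton := by
  intro i hi j hj
  by_contra hij
  obtain ⟨v, rfl, hv⟩ := hb i
  obtain ⟨u, hvu, rfl⟩ := hv j (Ne.symm hij)
  rcases hS hvu with hvS | huS
  · exact hi ⟨v, hvS, rfl⟩
  · exact hj ⟨u, huS, rfl⟩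

theorem bColoring_le_vertexCover_add_one_general {V : Type*} [Fintype V]
    (G : SimpleGraph V) (S : Set V)
    (hS : ∀ u v, G.Adj u v → u ∈ S ∨ v ∈ S)
    (k : ℕ) (h : G.HasBColoring k) :
    k ≤ S.ncard + 1 := by
  obtain ⟨c, -, hb⟩ := h
  have hcover : G.IsVertexCover S := fun u v huv ↦ hS u v huv
  calc k = Nat.card (Fin k) := (Nat.card_fin k).symm
    _ ≤ (c '' S).ncard + 1 :=
      Set.natCard_le_ncard_add_one_of_subsingleton_compl (hcover.subsingleton_compl_image hb)
    _ ≤ S.ncard + 1 :=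
      Nat.add_le_add_right (Set.ncard_image_le S.toFinite) 1

/-- If `S` is a vertex cover of a finite simple graph `G` and `G` admits a `b`-coloring
with `k` colors, then `k ≤ |S| + 1`. -/
theorem bColoring_le_vertexCover_add_one {V : Type*} [Fintype V] [DecidableEq V]
    (G : SimpleGraph V) (S : Set V)
    (hS : ∀ u v, G.Adj u v → u ∈ S ∨ v ∈ S)
    (k : ℕ) (h : G.HasBColoring k) :
    k ≤ S.ncard + 1 :=
  bColoring_le_vertexCover_add_one_general G S hS k h
end

section
/- Let G be a finite simple graph, S ⊆ V(G) a vertex cover of G, k ≥ 1 an integer, W a set with S ⊆ W ⊆ V(G), φ : W → {1,…,k} a proper partial coloring of G, and B ⊆ S with |B| ≤ k. If there exists a proper partial coloring of G extending φ that satisfies the (x,c)-need for every pair (x,c) with x ∈ B and c ∈ {1,…,k} a color not assigned by φ to any neighbor of x, then there exists a small extension of φ (a proper partial coloring extending φ whose domain contains at most k² − k vertices outside the domain of φ) that also satisfies all these (x,c)-needs. -/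
/-- `φ` is a proper partial coloring of `G` with colors `Fin k` (domain = support). -/
def ProperPartial {V : Type*} {k : ℕ} (G : SimpleGraph V) (φ : V → Option (Fin k)) : Prop :=
  ∀ u v, G.Adj u v → ∀ c : Fin k, φ u = some c → φ v ≠ some c

/-- `φ'` extends the partial coloring `φ`. -/
def ExtendsPartial {V : Type*} {k : ℕ} (φ φ' : V → Option (Fin k)) : Prop :=
  ∀ v c, φ v = some c → φ' v = some c

/-- `φ'` satisfies the `(x, c)`-need: some neighbor of `x` is assigned color `c`. -/
def SatisfiesNeed {V : Type*} {k : ℕ} (G : SimpleGraph V)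
    (φ' : V → Option (Fin k)) (x : V) (c : Fin k) : Prop :=
  ∃ y, G.Adj x y ∧ φ' y = some c

/-! Restrict the given extension `ψ` to the domain of `φ` plus one witness neighbour for each
need of `x ∈ B` not already met by `φ`; a restriction of a proper coloring stays proper.
Every `x ∈ B` is coloured by `φ` (as `B ⊆ S ⊆ W`), and the proper `ψ` can never give a
neighbour of `x` the colour of `x`, so `x` has at most `k - 1` unmet needs: at most
`|B| (k - 1) ≤ k² - k` witnesses get added. -/

open Finset in
theorem ncard_le_card_sub_one_mul_of_forall_exists_not_mem {α β : Type*} [Finite α]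
    [Fintype β] {B : Set α} {P : Set (α × β)} (hP : ∀ p ∈ P, p.1 ∈ B)
    (hmiss : ∀ x ∈ B, ∃ c, (x, c) ∉ P) :
    P.ncard ≤ (Fintype.card β - 1) * B.ncard := by
  classical
  have := Fintype.ofFinite α
  rw [Set.ncard_eq_toFinset_card', Set.ncard_eq_toFinset_card']
  refine card_le_mul_card_image_of_maps_to (f := Prod.fst) (by simpa using hP) _ ?_
  intro x hx
  obtain ⟨c, hc⟩ := hmiss x (by simpa using hx)
  calc #{p ∈ P.toFinset | p.1 = x}
      ≤ #(univ.erase c) := by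
        refine card_le_card_of_injOn Prod.snd ?_ ?_
        · rintro ⟨y, d⟩ hyd
          simp only [coe_filter, Set.mem_toFinset, Set.mem_ofPred_eq] at hyd
          obtain ⟨hmem, rfl⟩ := hyd
          simpa using fun (hdc : d = c) => hc (hdc ▸ hmem)
        · rintro ⟨y, d⟩ hyd ⟨y', d'⟩ hyd' (rfl : d = d')
          simp only [coe_filter, Set.mem_toFinset, Set.mem_ofPred_eq] at hyd hyd'
          rw [hyd.2, hyd'.2]
    _ = Fintype.card β - 1 := by rw [card_erase_of_mem (mem_univ c), card_univ]

section PartialColoring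

variable {V : Type*} {k : ℕ} {G : SimpleGraph V}

def unmetNeeds (G : SimpleGraph V) (φ : V → Option (Fin k)) (B : Set V) : Set (V × Fin k) :=
  {p | p.1 ∈ B ∧ ¬ SatisfiesNeed G φ p.1 p.2}

section Restrict

variable {α : Type*} {ψ : V → Option α} {s : Set V} {v : V}

open Classical in
noncomputable def restrictPartial (ψ : V → Option α) (s : Set V) : V → Option α :=
  fun v => if v ∈ s then ψ v else none

theorem restrictPartial_of_mem (hv : v ∈ s) : restrictPartial ψ s v = ψ v := if_pos hv

theorem mem_of_restrictPartial_ne_none (hv : restrictPartial ψ s v ≠ none) : v ∈ s := by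
  by_contra h
  exact hv (if_neg h)

theorem eq_some_of_restrictPartial_eq_some {a : α} (hv : restrictPartial ψ s v = some a) :
    ψ v = some a := by
  have hs : v ∈ s := mem_of_restrictPartial_ne_none (ψ := ψ) (by simp [hv])
  rwa [restrictPartial_of_mem hs] at hv

end Restrict

theorem ProperPartial.restrictPartial {ψ : V → Option (Fin k)} (hψ : ProperPartial G ψ)
    (s : Set V) : ProperPartial G (restrictPartial ψ s) := fun u v huv c hu hv =>
  hψ u v huv c (eq_some_of_restrictPartial_eq_some hu) (eq_some_of_restrictPartial_eq_some hv)

theorem ExtendsPartial.restrictPartial {φ ψ : V → Option (Fin k)} (hext : ExtendsPartial φ ψ)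
    {s : Set V} (hs : {v | φ v ≠ none} ⊆ s) : ExtendsPartial φ (restrictPartial ψ s) :=
  fun v c hv => (restrictPartial_of_mem (hs (by simp [hv]))).trans (hext v c hv)

theorem ProperPartial.not_satisfiesNeed_of_eq {ψ : V → Option (Fin k)} (hψ : ProperPartial G ψ)
    {x : V} {c : Fin k} (hx : ψ x = some c) : ¬ SatisfiesNeed G ψ x c :=
  fun ⟨y, hxy, hy⟩ => hψ x y hxy c hx hy

theorem ncard_unmetNeeds_le [Finite V] {φ ψ : V → Option (Fin k)} {B : Set V}
    (hψ : ProperPartial G ψ) (hext : ExtendsPartial φ ψ) (hB : ∀ x ∈ B, φ x ≠ none)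
    (hsat : ∀ p ∈ unmetNeeds G φ B, SatisfiesNeed G ψ p.1 p.2) :
    (unmetNeeds G φ B).ncard ≤ (k - 1) * B.ncard := by
  simpa using ncard_le_card_sub_one_mul_of_forall_exists_not_mem (β := Fin k)
    (fun p hp => hp.1) fun x hx => by
      obtain ⟨c, hc⟩ := Option.ne_none_iff_exists'.mp (hB x hx)
      exact ⟨c, fun hmem => hψ.not_satisfiesNeed_of_eq (hext x c hc) (hsat _ hmem)⟩

theorem exists_witnesses_ncard_le [Finite V] {ψ : V → Option (Fin k)} {N : Set (V × Fin k)}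
    (hsat : ∀ p ∈ N, SatisfiesNeed G ψ p.1 p.2) :
    ∃ T : Set V, T.ncard ≤ N.ncard ∧ ∀ p ∈ N, ∃ y ∈ T, G.Adj p.1 y ∧ ψ y = some p.2 := by
  classical
  let w p := if hp : p ∈ N then (hsat p hp).choose else p.1
  refine ⟨w '' N, Set.ncard_image_le, fun p hp => ⟨w p, Set.mem_image_of_mem w hp, ?_⟩⟩
  simpa [w, hp] using (hsat p hp).choose_spec

end PartialColoring

theorem small_extension_suffices_general {V : Type*} [Fintype V]
    (G : SimpleGraph V) (S : Set V)
    (k : ℕ)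
    (φ : V → Option (Fin k))
    (hdom : ∀ v ∈ S, φ v ≠ none)
    (B : Set V) (hB : B ⊆ S) (hBcard : B.ncard ≤ k)
    (hex : ∃ φ' : V → Option (Fin k), ProperPartial G φ' ∧ ExtendsPartial φ φ' ∧
      ∀ x ∈ B, ∀ c : Fin k, ¬ (∃ y, G.Adj x y ∧ φ y = some c) →
        SatisfiesNeed G φ' x c) :
    ∃ φ' : V → Option (Fin k), ProperPartial G φ' ∧ ExtendsPartial φ φ' ∧
      {v | φ v = none ∧ φ' v ≠ none}.ncard ≤ k ^ 2 - k ∧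
      ∀ x ∈ B, ∀ c : Fin k, ¬ (∃ y, G.Adj x y ∧ φ y = some c) →
        SatisfiesNeed G φ' x c := by
  obtain ⟨ψ, hψ, hext, hneeds⟩ := hex
  have hsat : ∀ p ∈ unmetNeeds G φ B, SatisfiesNeed G ψ p.1 p.2 :=
    fun p hp => hneeds p.1 hp.1 p.2 hp.2
  obtain ⟨T, hT, hwit⟩ := exists_witnesses_ncard_le hsat
  set s := {v | φ v ≠ none} ∪ T
  refine ⟨restrictPartial ψ s, hψ.restrictPartial s,
    hext.restrictPartial Set.subset_union_left, ?_, fun x hx c hc => ?_⟩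
  · have hnew : {v | φ v = none ∧ restrictPartial ψ s v ≠ none} ⊆ T := fun v ⟨hv, hv'⟩ =>
      (mem_of_restrictPartial_ne_none hv').resolve_left (not_not_intro hv)
    calc {v | φ v = none ∧ restrictPartial ψ s v ≠ none}.ncard
        ≤ T.ncard := Set.ncard_le_ncard hnew
      _ ≤ (unmetNeeds G φ B).ncard := hT
      _ ≤ (k - 1) * B.ncard :=
        ncard_unmetNeeds_le hψ hext (fun x hx => hdom x (hB hx)) hsat
      _ ≤ (k - 1) * k := Nat.mul_le_mul_left _ hBcard
      _ = k ^ 2 - k := by rw [Nat.sub_one_mul, sq]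
  · obtain ⟨y, hyT, hxy, hy⟩ := hwit (x, c) ⟨hx, hc⟩
    exact ⟨y, hxy, (restrictPartial_of_mem (s := s) (Or.inr hyT)).trans hy⟩

/-- Observation: let `G` be a finite simple graph, `S` a vertex cover of `G`, `k ≥ 1`,
`φ` a proper partial coloring of `G` with `k` colors whose domain `W` contains `S`, and
`B ⊆ S` with `|B| ≤ k`. If some proper partial coloring extending `φ` satisfies the
`(x, c)`-need for every `x ∈ B` and every color `c` not assigned by `φ` to any neighbor
of `x`, then some small extension of `φ` (a proper partial coloring extending `φ` which
colors at most `k² − k` vertices outside the domain of `φ`) also satisfies all these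
needs. -/
theorem small_extension_suffices {V : Type*} [Fintype V] [DecidableEq V]
    (G : SimpleGraph V) (S : Set V)
    (hS : ∀ u v, G.Adj u v → u ∈ S ∨ v ∈ S)
    (k : ℕ) (hk : 1 ≤ k)
    (φ : V → Option (Fin k))
    (hdom : ∀ v ∈ S, φ v ≠ none)
    (hφ : ProperPartial G φ)
    (B : Set V) (hB : B ⊆ S) (hBcard : B.ncard ≤ k)
    (hex : ∃ φ' : V → Option (Fin k), ProperPartial G φ' ∧ ExtendsPartial φ φ' ∧
      ∀ x ∈ B, ∀ c : Fin k, ¬ (∃ y, G.Adj x y ∧ φ y = some c) →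
        SatisfiesNeed G φ' x c) :
    ∃ φ' : V → Option (Fin k), ProperPartial G φ' ∧ ExtendsPartial φ φ' ∧
      {v | φ v = none ∧ φ' v ≠ none}.ncard ≤ k ^ 2 - k ∧
      ∀ x ∈ B, ∀ c : Fin k, ¬ (∃ y, G.Adj x y ∧ φ y = some c) →
        SatisfiesNeed G φ' x c :=
  small_extension_suffices_general G S k φ hdom B hB hBcard hex
end

section
/- Let G be a finite simple graph, let S ⊆ V(G) be a vertex cover of G, let k ≥ 1, and let X ⊆ V(G) \ S be a set of at least k + 1 vertices all having the same open neighborhood in G (i.e., N_G(u) = N_G(v) for all u, v ∈ X). Then for any x ∈ X, the graph G admits a b-coloring with k colors if and only if the induced subgraph G − x (on vertex set V(G) \ {x}) admits a b-coloring with k colors. -/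
/-!
Vertices of `X` are pairwise non-adjacent twins, so for distinct `x, y ∈ X` the map sending `x` to
`y` and fixing everything else is a homomorphism `G →g G − x`, and the inclusion is a homomorphism
`G − x →g G`. Given homomorphisms `f : G →g H` and `g : H →g G` with `c ∘ g ∘ f = c`, a
`b`-coloring `c` of `G` pulls back to the `b`-coloring `c ∘ g` of `H`: properness pulls back along
`g`, and `b`-vertices push forward along `f`. This moves a `b`-coloring of `G − x` to `G`, and a
`b`-coloring of `G` in which some twin `y ≠ x` has the color of `x` to `G − x`. If no such twin
exists, the `k` twins in `X \ {x}` share the `k - 1` colors other than that of `x`, so two of them,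
`y` and `z`, have the same color, and recoloring `y` with the color of `x` keeps a `b`-coloring:
`z` takes over the role of `y`.
-/

theorem Set.exists_ne_map_eq_of_forall_map_ne {α : Type*} {s : Set α} {k : ℕ} {f : α → Fin k}
    {i : Fin k} (hks : k ≤ s.ncard) (hf : ∀ a ∈ s, f a ≠ i) :
    ∃ a ∈ s, ∃ b ∈ s, a ≠ b ∧ f a = f b := by
  refine exists_ne_map_eq_of_ncard_lt_of_maps_to (t := {i}ᶜ) ?_ hf
  have := i.pos
  rw [ncard_compl, ncard_singleton, Nat.card_eq_fintype_card, Fintype.card_fin]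
  omega

namespace SimpleGraph

variable {V W ι : Type*} {G : SimpleGraph V} {H : SimpleGraph W}

def IsBColoring (G : SimpleGraph V) (c : V → ι) : Prop :=
  (∀ u v, G.Adj u v → c u ≠ c v) ∧
    ∀ i, ∃ v, c v = i ∧ ∀ j, j ≠ i → ∃ u, G.Adj v u ∧ c u = j

theorem hasBColoring_iff_exists_isBColoring {k : ℕ} :
    G.HasBColoring k ↔ ∃ c : V → Fin k, G.IsBColoring c :=
  Iff.rfl

theorem IsBColoring.comp_of_comp_comp {c : V → ι} (hc : G.IsBColoring c) (f : G →g H)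
    (g : H →g G) (hgf : ∀ v, c (g (f v)) = c v) : H.IsBColoring (c ∘ g) := by
  refine ⟨fun u v huv => hc.1 _ _ (g.map_rel huv), fun i => ?_⟩
  obtain ⟨v, rfl, hv⟩ := hc.2 i
  refine ⟨f v, hgf v, fun j hj => ?_⟩
  obtain ⟨u, hvu, rfl⟩ := hv j (hgf v ▸ hj)
  exact ⟨f u, f.map_rel hvu, hgf u⟩

section Twins

variable {x y z : V}

theorem adj_iff_of_neighborSet_eq (hxy : G.neighborSet x = G.neighborSet y) (v : V) :
    G.Adj x v ↔ G.Adj y v :=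
  Set.ext_iff.mp hxy v

variable [DecidableEq V]

def twinRetract (hxy : G.neighborSet x = G.neighborSet y) (hyx : y ≠ x) :
    G →g G.induce {x}ᶜ where
  toFun v := if h : v = x then ⟨y, hyx⟩ else ⟨v, h⟩
  map_rel' {u v} huv := by
    have hy : ∀ {w}, G.Adj x w → G.Adj y w := (adj_iff_of_neighborSet_eq hxy _).mp
    by_cases hu : u = x <;> by_cases hv : v = x <;> subst_vars <;> simp only [dif_pos, *]
    · exact (G.loopless.irrefl _ huv).elim
    · exact hy huv
    · exact (hy huv.symm).symm
    · exact huv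

theorem twinRetract_apply_of_ne (hxy : G.neighborSet x = G.neighborSet y) (hyx : y ≠ x)
    {v : V} (hv : v ≠ x) : twinRetract hxy hyx v = ⟨v, hv⟩ :=
  dif_neg hv

theorem twinRetract_apply_self (hxy : G.neighborSet x = G.neighborSet y) (hyx : y ≠ x) :
    twinRetract hxy hyx x = ⟨y, hyx⟩ :=
  dif_pos rfl

def twinFold (hxy : G.neighborSet x = G.neighborSet y) (hyx : y ≠ x) : G →g G :=
  (Embedding.induce {x}ᶜ).toHom.comp (twinRetract hxy hyx)

theorem twinFold_apply_of_ne (hxy : G.neighborSet x = G.neighborSet y) (hyx : y ≠ x)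
    {v : V} (hv : v ≠ x) : twinFold hxy hyx v = v := by
  simp [twinFold, twinRetract_apply_of_ne hxy hyx hv]

theorem twinFold_apply_self (hxy : G.neighborSet x = G.neighborSet y) (hyx : y ≠ x) :
    twinFold hxy hyx x = y := by
  simp [twinFold, twinRetract_apply_self]

theorem IsBColoring.comp_twinRetract (hxy : G.neighborSet x = G.neighborSet y) (hyx : y ≠ x)
    {c : ({x}ᶜ : Set V) → ι} (hc : (G.induce {x}ᶜ).IsBColoring c) :
    G.IsBColoring (c ∘ twinRetract hxy hyx) :=
  hc.comp_of_comp_comp (Embedding.induce _).toHom (twinRetract hxy hyx) fun v => by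
    simp [twinRetract_apply_of_ne hxy hyx v.2]

theorem IsBColoring.induce_compl_singleton (hxy : G.neighborSet x = G.neighborSet y)
    (hyx : y ≠ x) {c : V → ι} (hc : G.IsBColoring c) (hcyx : c y = c x) :
    (G.induce {x}ᶜ).IsBColoring (c ∘ (↑)) := by
  refine hc.comp_of_comp_comp (twinRetract hxy hyx) (Embedding.induce _).toHom fun v => ?_
  by_cases hv : v = x
  · simp [hv, twinRetract_apply_self, hcyx]
  · simp [twinRetract_apply_of_ne hxy hyx hv]

/-- `c ∘ twinFold hxy hyx` is `c` with `x` recolored by `c y`. -/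
theorem IsBColoring.comp_twinFold (hxy : G.neighborSet x = G.neighborSet y)
    (hxz : G.neighborSet x = G.neighborSet z) (hyx : y ≠ x) (hzx : z ≠ x) {c : V → ι}
    (hc : G.IsBColoring c) (hczx : c z = c x) : G.IsBColoring (c ∘ twinFold hxy hyx) := by
  refine hc.comp_of_comp_comp (twinFold hxz hzx) (twinFold hxy hyx) fun v => ?_
  by_cases hv : v = x
  · simp [hv, twinFold_apply_self, twinFold_apply_of_ne hxy hyx hzx, hczx]
  · simp [twinFold_apply_of_ne _ _ hv]

theorem IsBColoring.exists_twin_eq {k : ℕ} {c : V → Fin k} (hc : G.IsBColoring c) {s : Set V}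
    (hs : ∀ y ∈ s, G.neighborSet y = G.neighborSet x) (hxs : x ∉ s) (hks : k ≤ s.ncard) :
    ∃ c' : V → Fin k, G.IsBColoring c' ∧ ∃ y ∈ s, c' y = c' x := by
  by_cases h : ∃ y ∈ s, c y = c x
  · exact ⟨c, hc, h⟩
  push Not at h
  obtain ⟨y, hy, z, hz, hyz, hcyz⟩ := Set.exists_ne_map_eq_of_forall_map_ne hks h
  have hxy : x ≠ y := fun hxy => hxs (hxy ▸ hy)
  refine ⟨_, hc.comp_twinFold (hs y hy) ((hs y hy).trans (hs z hz).symm) hxy hyz.symm hcyz.symm,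
    y, hy, ?_⟩
  simp [twinFold_apply_self, twinFold_apply_of_ne _ _ hxy]

end Twins

end SimpleGraph

theorem hasBColoring_iff_deleteVert_general {V : Type*} [DecidableEq V]
    (G : SimpleGraph V)
    (k : ℕ) (hk : 1 ≤ k)
    (X : Set V) (hXcard : k + 1 ≤ X.ncard)
    (hXnbhd : ∀ u ∈ X, ∀ v ∈ X, G.neighborSet u = G.neighborSet v)
    (x : V) (hx : x ∈ X) :
    G.HasBColoring k ↔ (G.induce {x}ᶜ).HasBColoring k := by
  have htwins : ∀ y ∈ X \ {x}, G.neighborSet y = G.neighborSet x :=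
    fun y hy => hXnbhd y hy.1 x hx
  have hcard : k ≤ (X \ {x}).ncard := by
    rw [Set.ncard_sdiff_singleton_of_mem hx]
    omega
  simp only [SimpleGraph.hasBColoring_iff_exists_isBColoring]
  constructor
  · rintro ⟨c, hc⟩
    obtain ⟨c', hc', y, hy, hcy⟩ := hc.exists_twin_eq htwins (by simp) hcard
    exact ⟨_, hc'.induce_compl_singleton (htwins y hy).symm hy.2 hcy⟩
  · rintro ⟨c, hc⟩
    obtain ⟨y, hy⟩ := Set.nonempty_of_ncard_ne_zero (by omega : (X \ {x}).ncard ≠ 0)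
    exact ⟨_, hc.comp_twinRetract (htwins y hy).symm hy.2⟩

/-- Let `G` be a finite simple graph, `S` a vertex cover of `G`, `k ≥ 1`, and `X` a set
of at least `k + 1` vertices outside of `S` all having the same open neighborhood in
`G`. Then for any `x ∈ X`, `G` admits a `b`-coloring with `k` colors if and only if
`G − x` does. -/
theorem hasBColoring_iff_deleteVert {V : Type*} [Fintype V] [DecidableEq V]
    (G : SimpleGraph V) (S : Set V)
    (hS : ∀ u v, G.Adj u v → u ∈ S ∨ v ∈ S)
    (k : ℕ) (hk : 1 ≤ k)
    (X : Set V) (hXS : X ⊆ Sᶜ) (hXcard : k + 1 ≤ X.ncard)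
    (hXnbhd : ∀ u ∈ X, ∀ v ∈ X, G.neighborSet u = G.neighborSet v)
    (x : V) (hx : x ∈ X) :
    G.HasBColoring k ↔ (G.induce {x}ᶜ).HasBColoring k :=
  hasBColoring_iff_deleteVert_general G k hk X hXcard hXnbhd x hx
end
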